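/- arXiv:0801.3431 — 2 statements merged into one kernel-verified Lean document; each statement's English description precedes it below -/
import Mathlib

section
/- Let f and g be functions that are positive on (0, ∞) and integrable on every interval [0, r], and suppose that the ratio f/g is monotone nondecreasing on (0, ∞). Then the function r ↦ (∫₀^r f(s) ds) / (∫₀^r g(s) ds) is monotone nondecreasing on (0, ∞). -/
open MeasureTheory intervalIntegral Set

/-! With `c = f r₁ / g r₁`, monotonicity of `f / g` gives `f ≤ c g` on `(0, r₁)` and `c g ≤ f`
on `(r₁, r₂)`. Integrating, `∫₀^{r₁} f / ∫₀^{r₁} g ≤ c` while `∫_{r₁}^{r₂} f ≥ c ∫_{r₁}^{r₂} g`,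
and the ratio over `[0, r₂]` is the mediant of these two pieces, so it can only go up. -/

theorem div_le_add_div_add_of_le_mul_of_mul_le {F G F' G' c : ℝ} (hG : 0 < G) (hG' : 0 ≤ G')
    (h : F ≤ c * G) (h' : c * G' ≤ F') : F / G ≤ (F + F') / (G + G') := by
  rw [div_le_div_iff₀ hG (by positivity)]
  nlinarith [mul_le_mul_of_nonneg_right h hG', mul_le_mul_of_nonneg_left h' hG.le]

theorem intervalIntegrable_of_forall_integrableOn_Icc_zero {f : ℝ → ℝ}
    (hf : ∀ r : ℝ, 0 < r → IntegrableOn f (Icc 0 r)) (a b : ℝ) (ha : 0 ≤ a) (hb : 0 ≤ b) :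
    IntervalIntegrable f volume a b := by
  have hr : 0 < max a b + 1 := by positivity
  refine ((hf _ hr).mono_set (uIcc_subset_Icc ⟨ha, ?_⟩ ⟨hb, ?_⟩)).intervalIntegrable <;>
    linarith [le_max_left a b, le_max_right a b]

section RatioBounds

variable {f g : ℝ → ℝ} {a b c : ℝ}

theorem integral_le_mul_integral_of_div_le (hab : a ≤ b) (hf : IntervalIntegrable f volume a b)
    (hg : IntervalIntegrable g volume a b) (hg_pos : ∀ x ∈ Ioo a b, 0 < g x)
    (h : ∀ x ∈ Ioo a b, f x / g x ≤ c) :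
    ∫ x in a..b, f x ≤ c * ∫ x in a..b, g x := by
  rw [← intervalIntegral.integral_const_mul]
  exact integral_mono_on_of_le_Ioo hab hf (hg.const_mul c) fun x hx =>
    (div_le_iff₀ (hg_pos x hx)).1 (h x hx)

theorem mul_integral_le_integral_of_le_div (hab : a ≤ b) (hf : IntervalIntegrable f volume a b)
    (hg : IntervalIntegrable g volume a b) (hg_pos : ∀ x ∈ Ioo a b, 0 < g x)
    (h : ∀ x ∈ Ioo a b, c ≤ f x / g x) :
    c * ∫ x in a..b, g x ≤ ∫ x in a..b, f x := by
  rw [← intervalIntegral.integral_const_mul]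
  exact integral_mono_on_of_le_Ioo hab (hg.const_mul c) hf fun x hx =>
    (le_div_iff₀ (hg_pos x hx)).1 (h x hx)

end RatioBounds

theorem integral_ratio_monotone_general
    (f g : ℝ → ℝ)
    (hg_pos : ∀ s : ℝ, 0 < s → 0 < g s)
    (hf_int : ∀ r : ℝ, 0 < r → MeasureTheory.IntegrableOn f (Set.Icc 0 r))
    (hg_int : ∀ r : ℝ, 0 < r → MeasureTheory.IntegrableOn g (Set.Icc 0 r))
    (hratio : ∀ s t : ℝ, 0 < s → s ≤ t → f s / g s ≤ f t / g t) :
    ∀ r₁ r₂ : ℝ, 0 < r₁ → r₁ ≤ r₂ →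
      (∫ s in (0:ℝ)..r₁, f s) / (∫ s in (0:ℝ)..r₁, g s)
        ≤ (∫ s in (0:ℝ)..r₂, f s) / (∫ s in (0:ℝ)..r₂, g s) := by
  intro r₁ r₂ hr₁ hr
  have hr₂ : 0 ≤ r₂ := hr₁.le.trans hr
  have hfI := intervalIntegrable_of_forall_integrableOn_Icc_zero hf_int
  have hgI := intervalIntegrable_of_forall_integrableOn_Icc_zero hg_int
  have hg_pos_Ioo : ∀ a b, 0 ≤ a → ∀ x ∈ Ioo a b, 0 < g x := fun a b ha x hx =>
    hg_pos x (ha.trans_lt hx.1)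
  have hG₁ : 0 < ∫ s in (0:ℝ)..r₁, g s :=
    intervalIntegral_pos_of_pos_on (hgI 0 r₁ le_rfl hr₁.le) (hg_pos_Ioo 0 r₁ le_rfl) hr₁
  have hG' : 0 ≤ ∫ s in r₁..r₂, g s :=
    integral_nonneg hr fun x hx => (hg_pos x (hr₁.trans_le hx.1)).le
  have h₁ := integral_le_mul_integral_of_div_le hr₁.le (hfI 0 r₁ le_rfl hr₁.le)
    (hgI 0 r₁ le_rfl hr₁.le) (hg_pos_Ioo 0 r₁ le_rfl) fun x hx => hratio x r₁ hx.1 hx.2.le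
  have h₂ := mul_integral_le_integral_of_le_div hr (hfI r₁ r₂ hr₁.le hr₂)
    (hgI r₁ r₂ hr₁.le hr₂) (hg_pos_Ioo r₁ r₂ hr₁.le) fun x hx => hratio r₁ x hr₁ hx.1.le
  rw [← integral_add_adjacent_intervals (hfI 0 r₁ le_rfl hr₁.le) (hfI r₁ r₂ hr₁.le hr₂),
    ← integral_add_adjacent_intervals (hgI 0 r₁ le_rfl hr₁.le) (hgI r₁ r₂ hr₁.le hr₂)]
  exact div_le_add_div_add_of_le_mul_of_mul_le hG₁ hG' h₁ h₂

/-- Lemma 1.3 (Gromov): if `f` and `g` are positive on `(0, ∞)`, integrable on every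
interval `[0, r]`, and the ratio `f / g` is monotone nondecreasing on `(0, ∞)`,
then `r ↦ (∫₀^r f) / (∫₀^r g)` is monotone nondecreasing on `(0, ∞)`. -/
theorem integral_ratio_monotone
    (f g : ℝ → ℝ)
    (hf_pos : ∀ s : ℝ, 0 < s → 0 < f s)
    (hg_pos : ∀ s : ℝ, 0 < s → 0 < g s)
    (hf_int : ∀ r : ℝ, 0 < r → MeasureTheory.IntegrableOn f (Set.Icc 0 r))
    (hg_int : ∀ r : ℝ, 0 < r → MeasureTheory.IntegrableOn g (Set.Icc 0 r))
    (hratio : ∀ s t : ℝ, 0 < s → s ≤ t → f s / g s ≤ f t / g t) :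
    ∀ r₁ r₂ : ℝ, 0 < r₁ → r₁ ≤ r₂ →
      (∫ s in (0:ℝ)..r₁, f s) / (∫ s in (0:ℝ)..r₁, g s)
        ≤ (∫ s in (0:ℝ)..r₂, f s) / (∫ s in (0:ℝ)..r₂, g s) :=
  integral_ratio_monotone_general f g hg_pos hf_int hg_int hratio
end

section
/- Let k ≥ 2 be an integer, r > 0 a real number, and h : ℝ → ℝ a measurable function that is bounded on [0, r]. Then |∫₀^r (sinh s / sinh r)^{k-1} · h(s) ds| ≤ (1/(k-1)) · sup_{0 ≤ s ≤ r} |h(s)|. -/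
/-!
For `0 ≤ s ≤ r` one has `sinh s / sinh r ≤ exp (s - r)`, so the weight is dominated by
`exp ((k - 1) (s - r))`, whose integral over `[0, r]` is `(1 - exp (-(k - 1) r)) / (k - 1) ≤ 1 / (k - 1)`.
-/

open Real Set intervalIntegral

theorem Real.sinh_mul_exp_le_exp_mul_sinh {s r : ℝ} (hsr : s ≤ r) :
    sinh s * exp r ≤ exp s * sinh r := by
  have key : exp s * exp (-r) ≤ exp (-s) * exp r := by
    rw [← exp_add, ← exp_add, exp_le_exp]
    linarith
  rw [sinh_eq, sinh_eq]
  linarith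

theorem Real.sinh_div_sinh_le_exp_sub {s r : ℝ} (hsr : s ≤ r) (hr : 0 < r) :
    sinh s / sinh r ≤ exp (s - r) := by
  rw [div_le_iff₀ (sinh_pos_iff.mpr hr), exp_sub, div_mul_eq_mul_div,
    le_div_iff₀ (exp_pos r)]
  exact sinh_mul_exp_le_exp_mul_sinh hsr

theorem Real.sinh_div_sinh_pow_le_exp {s r : ℝ} (hs : s ∈ Icc 0 r) (hr : 0 < r) (n : ℕ) :
    (sinh s / sinh r) ^ n ≤ exp (n * (s - r)) := by
  rw [exp_nat_mul]
  exact pow_le_pow_left₀ (div_nonneg (sinh_nonneg_iff.mpr hs.1) (sinh_pos_iff.mpr hr).le)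
    (sinh_div_sinh_le_exp_sub hs.2 hr) n

theorem integral_exp_mul_sub_le {c : ℝ} (hc : 0 < c) (r : ℝ) :
    ∫ s in (0 : ℝ)..r, exp (c * s - c * r) ≤ 1 / c := by
  rw [integral_comp_mul_sub (fun x => exp x) hc.ne', integral_exp, smul_eq_mul, sub_self,
    exp_zero, one_div]
  have : 0 < exp (c * 0 - c * r) := exp_pos _
  exact mul_le_of_le_one_right (inv_nonneg.mpr hc.le) (by linarith)

theorem abs_integral_sinh_div_pow_mul_le {n : ℕ} (hn : 0 < n) {r : ℝ} (hr : 0 < r)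
    {h : ℝ → ℝ} {M : ℝ} (hM : ∀ s ∈ Icc 0 r, |h s| ≤ M) :
    |∫ s in (0 : ℝ)..r, (sinh s / sinh r) ^ n * h s| ≤ 1 / n * M := by
  have hM0 : 0 ≤ M := (abs_nonneg _).trans (hM 0 ⟨le_rfl, hr.le⟩)
  have hbound : ∀ s ∈ Ioc 0 r, ‖(sinh s / sinh r) ^ n * h s‖ ≤ M * exp (n * s - n * r) := by
    intro s hs
    have hs' : s ∈ Icc 0 r := Ioc_subset_Icc_self hs
    rw [norm_mul, norm_of_nonneg (pow_nonneg (div_nonneg (sinh_nonneg_iff.mpr hs'.1)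
      (sinh_pos_iff.mpr hr).le) n), mul_comm M, ← mul_sub]
    exact mul_le_mul (sinh_div_sinh_pow_le_exp hs' hr n) (hM s hs') (norm_nonneg _)
      (exp_pos _).le
  calc |∫ s in (0 : ℝ)..r, (sinh s / sinh r) ^ n * h s|
      ≤ ∫ s in (0 : ℝ)..r, M * exp (n * s - n * r) :=
        norm_integral_le_of_norm_le hr.le (Filter.Eventually.of_forall hbound)
          ((by fun_prop : Continuous fun s => M * exp (n * s - n * r)).intervalIntegrable _ _)
    _ = M * ∫ s in (0 : ℝ)..r, exp (n * s - n * r) := integral_const_mul _ _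
    _ ≤ M * (1 / n) := mul_le_mul_of_nonneg_left
        (integral_exp_mul_sub_le (Nat.cast_pos.mpr hn) r) hM0
    _ = 1 / n * M := mul_comm _ _

theorem abs_integral_sinh_weight_le_general (k : ℕ) (hk : 2 ≤ k) (r : ℝ) (hr : 0 < r)
    (h : ℝ → ℝ)
    (hbdd : ∃ C : ℝ, ∀ s ∈ Set.Icc (0:ℝ) r, |h s| ≤ C) :
    |∫ s in (0:ℝ)..r, (Real.sinh s / Real.sinh r) ^ (k - 1) * h s|
      ≤ (1 / ((k : ℝ) - 1)) * ⨆ s : Set.Icc (0:ℝ) r, |h s| := by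
  obtain ⟨C, hC⟩ := hbdd
  have hsup : ∀ s ∈ Icc (0 : ℝ) r, |h s| ≤ ⨆ s : Icc (0 : ℝ) r, |h s| := fun s hs =>
    le_ciSup (f := fun s : Icc (0 : ℝ) r => |h s|) ⟨C, by rintro _ ⟨s, rfl⟩; exact hC s s.2⟩
      ⟨s, hs⟩
  have hcast : ((k - 1 : ℕ) : ℝ) = (k : ℝ) - 1 := by
    rw [Nat.cast_sub (by omega), Nat.cast_one]
  simpa only [hcast] using abs_integral_sinh_div_pow_mul_le (by omega : 0 < k - 1) hr hsup

/-- Scalar form of the estimates (1.9)–(1.11): for an integer `k ≥ 2`, a real `r > 0`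
and a measurable function `h` bounded on `[0, r]`,
`|∫₀^r (sinh s / sinh r)^(k-1) · h(s) ds| ≤ (1/(k-1)) · sup_{0 ≤ s ≤ r} |h s|`. -/
theorem abs_integral_sinh_weight_le (k : ℕ) (hk : 2 ≤ k) (r : ℝ) (hr : 0 < r)
    (h : ℝ → ℝ) (hmeas : Measurable h)
    (hbdd : ∃ C : ℝ, ∀ s ∈ Set.Icc (0:ℝ) r, |h s| ≤ C) :
    |∫ s in (0:ℝ)..r, (Real.sinh s / Real.sinh r) ^ (k - 1) * h s|
      ≤ (1 / ((k : ℝ) - 1)) * ⨆ s : Set.Icc (0:ℝ) r, |h s| :=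
  abs_integral_sinh_weight_le_general k hk r hr h hbdd
end
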